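/- arXiv:1907.10860 — 8 statements merged into one kernel-verified Lean document; each statement's English description precedes it below -/
import Mathlib

section
/- Bounded sequences (Lemma 3). Along the Tracking-ADMM iterations: (i) the sequences (x_{1,k},…,x_{N,k})_{k≥0} and (z_{1,k},…,z_{N,k})_{k≥0} are bounded (i.e. sup_k Σ_i ‖x_{i,k}‖ < ∞ and sup_k Σ_i ‖z_{i,k}‖ < ∞); (ii) the consensus-error sequences (e^d_{1,k},…,e^d_{N,k})_{k≥0} and (e^λ_{1,k},…,e^λ_{N,k})_{k≥0} are bounded. -/
open Finset
open scoped RealInnerProductSpace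

/-!
The iterates `x i k` stay in the compact sets `X i`, so they and `A i (x i k)` are bounded.
Column stochasticity makes `d` track the constraint residual,
`∑ i, d i k = ∑ i, A i (x i k) - ∑ i, bv i`, which bounds the average of `d` and hence `z`.
The consensus errors evolve as `e (k + 1) = W e k + input k`. On stacked vectors with zero block
sum, a doubly stochastic `W` with positive diagonal and connected graph is a strict contraction
for the `ℓ²` norm, because `‖v‖² - ‖W v‖² = ∑ i j, W i j * ‖v j - (W v) i‖²` vanishes only at
consensus; by compactness it contracts by a uniform factor `σ < 1`. Bounded inputs therefore give
bounded consensus errors: first for `d`, whose input is the increment of `A i (x i k)`, then for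
`lam`, whose input is `c` times the consensus error of `d`.
-/

theorem le_max_of_le_mul_add {σ G : ℝ} (hσ0 : 0 ≤ σ) (hσ1 : σ < 1) {m : ℕ → ℝ}
    (hm : ∀ k, m (k + 1) ≤ σ * m k + G) (k : ℕ) : m k ≤ max (m 0) (G / (1 - σ)) := by
  have hG : G ≤ (1 - σ) * max (m 0) (G / (1 - σ)) := by
    rw [← div_le_iff₀' (sub_pos.mpr hσ1)]
    exact le_max_right _ _
  induction k with
  | zero => exact le_max_left _ _
  | succ k ih => nlinarith [hm k, mul_le_mul_of_nonneg_left ih hσ0]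

theorem exists_forall_norm_le_of_le_mul_add {V : Type*} [SeminormedAddCommGroup V] {σ G : ℝ}
    (hσ0 : 0 ≤ σ) (hσ1 : σ < 1) {u : ℕ → V} (hu : ∀ k, ‖u (k + 1)‖ ≤ σ * ‖u k‖ + G) :
    ∃ C, ∀ k, ‖u k‖ ≤ C :=
  ⟨_, le_max_of_le_mul_add hσ0 hσ1 hu⟩

theorem Submodule.exists_lt_one_forall_norm_le_of_norm_lt {V F : Type*} [NormedAddCommGroup V]
    [NormedSpace ℝ V] [FiniteDimensional ℝ V] [SeminormedAddCommGroup F] [NormedSpace ℝ F]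
    (T : V →ₗ[ℝ] F) (S : Submodule ℝ V) (hT : ∀ v ∈ S, v ≠ 0 → ‖T v‖ < ‖v‖) :
    ∃ σ, 0 ≤ σ ∧ σ < 1 ∧ ∀ v ∈ S, ‖T v‖ ≤ σ * ‖v‖ := by
  have hK : IsCompact ((S : Set V) ∩ Metric.closedBall 0 1) :=
    (isCompact_closedBall 0 1).inter_left S.closed_of_finiteDimensional
  obtain ⟨v₀, ⟨hv₀S, hv₀⟩, hmax⟩ :=
    hK.exists_isMaxOn ⟨0, S.zero_mem, Metric.mem_closedBall_self zero_le_one⟩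
      T.continuous_of_finiteDimensional.norm.continuousOn
  refine ⟨‖T v₀‖, norm_nonneg _, ?_, fun v hv => ?_⟩
  · rcases eq_or_ne v₀ 0 with rfl | hne
    · simp
    · exact (hT v₀ hv₀S hne).trans_le (mem_closedBall_zero_iff.mp hv₀)
  · rcases eq_or_ne v 0 with rfl | hne
    · simp
    have hpos : 0 < ‖v‖ := norm_pos_iff.mpr hne
    have hunit : ‖v‖⁻¹ • v ∈ (S : Set V) ∩ Metric.closedBall 0 1 :=
      ⟨S.smul_mem _ hv, by simp [norm_smul, hpos.ne']⟩
    have : ‖T (‖v‖⁻¹ • v)‖ ≤ ‖T v₀‖ := hmax hunit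
    simp only [map_smul, norm_smul, norm_inv, norm_norm] at this
    rwa [inv_mul_le_iff₀ hpos, mul_comm] at this

theorem exists_forall_sum_norm_le_of_forall_mem {ι : Type*} [Fintype ι] {E : ι → Type*}
    [∀ i, SeminormedAddCommGroup (E i)] {K : ∀ i, Set (E i)}
    (hK : ∀ i, Bornology.IsBounded (K i)) {u : ∀ i, ℕ → E i} (hu : ∀ i k, u i k ∈ K i) :
    ∃ C, ∀ k, ∑ i, ‖u i k‖ ≤ C := by
  choose R hR using fun i => (hK i).exists_norm_le
  exact ⟨∑ i, R i, fun k => sum_le_sum fun i _ => hR i _ (hu i k)⟩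

namespace Consensus

variable {ι : Type*} [Fintype ι] {E : Type*}

section Seminormed

variable [SeminormedAddCommGroup E]

theorem norm_le_sum_norm (v : PiLp 2 (fun _ : ι => E)) : ‖v‖ ≤ ∑ i, ‖v i‖ := by
  refine le_of_sq_le_sq ?_ (sum_nonneg fun i _ => norm_nonneg _)
  rw [PiLp.norm_sq_eq_of_L2]
  exact sum_sq_le_sq_sum_of_nonneg fun i _ => norm_nonneg _

theorem sum_norm_le_card_mul_norm (v : PiLp 2 (fun _ : ι => E)) :
    ∑ i, ‖v i‖ ≤ Fintype.card ι * ‖v‖ := by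
  simpa using sum_le_sum fun i (_ : i ∈ univ) => PiLp.norm_apply_le v i

theorem sum_norm_sub_average_le [NormedSpace ℝ E] {a D b : ι → E}
    (h : ∑ i, D i = ∑ i, a i - ∑ i, b i) :
    ∑ i, ‖a i - (Fintype.card ι : ℝ)⁻¹ • ∑ j, D j‖ ≤ 2 * ∑ i, ‖a i‖ + ∑ i, ‖b i‖ := by
  calc ∑ i, ‖a i - (Fintype.card ι : ℝ)⁻¹ • ∑ j, D j‖
      ≤ ∑ i, (‖a i‖ + (Fintype.card ι : ℝ)⁻¹ * ‖∑ j, D j‖) :=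
        sum_le_sum fun i _ => (norm_sub_le _ _).trans_eq (by rw [norm_smul, norm_inv,
          Real.norm_natCast])
    _ ≤ ∑ i, ‖a i‖ + ‖∑ j, D j‖ := by
        rw [sum_add_distrib, sum_const, card_univ, nsmul_eq_mul, ← mul_assoc]
        exact add_le_add_right (mul_le_of_le_one_left (norm_nonneg _) mul_inv_le_one) _
    _ ≤ 2 * ∑ i, ‖a i‖ + ∑ i, ‖b i‖ := by
        rw [h]
        linarith [norm_sub_le (∑ i, a i) (∑ i, b i), norm_sum_le univ a, norm_sum_le univ b]

end Seminormed

variable [NormedAddCommGroup E] [InnerProductSpace ℝ E]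

def mixing (W : Matrix ι ι ℝ) : PiLp 2 (fun _ : ι => E) →ₗ[ℝ] PiLp 2 (fun _ : ι => E) where
  toFun v := WithLp.toLp 2 fun i => ∑ j, W i j • v j
  map_add' u v := by ext i; simp [smul_add, sum_add_distrib]
  map_smul' r v := by ext i; simp [smul_sum, smul_comm r]

@[simp]
theorem mixing_apply (W : Matrix ι ι ℝ) (v : PiLp 2 (fun _ : ι => E)) (i : ι) :
    mixing W v i = ∑ j, W i j • v j := rfl

variable {W : Matrix ι ι ℝ}

theorem sum_mixing_apply (hcol : ∀ j, ∑ i, W i j = 1) (v : PiLp 2 (fun _ : ι => E)) :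
    ∑ i, mixing W v i = ∑ i, v i := by
  simp only [mixing_apply]
  rw [sum_comm]
  simp [← sum_smul, hcol]

theorem sum_mul_norm_sub_mixing_sq (hrow : ∀ i, ∑ j, W i j = 1) (v : PiLp 2 (fun _ : ι => E))
    (i : ι) : ∑ j, W i j * ‖v j - mixing W v i‖ ^ 2
      = ∑ j, W i j * ‖v j‖ ^ 2 - ‖mixing W v i‖ ^ 2 := by
  have hinner : ∑ j, W i j * ⟪v j, mixing W v i⟫ = ‖mixing W v i‖ ^ 2 := by
    simp_rw [← real_inner_smul_left, ← sum_inner, ← mixing_apply, real_inner_self_eq_norm_sq]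
  simp_rw [norm_sub_sq_real, mul_add, mul_sub, sum_add_distrib, sum_sub_distrib]
  rw [← sum_mul, hrow]
  simp_rw [mul_left_comm (W i _) 2, ← mul_sum, hinner]
  ring

theorem norm_sq_sub_norm_mixing_sq (hrow : ∀ i, ∑ j, W i j = 1) (hcol : ∀ j, ∑ i, W i j = 1)
    (v : PiLp 2 (fun _ : ι => E)) :
    ‖v‖ ^ 2 - ‖mixing W v‖ ^ 2 = ∑ i, ∑ j, W i j * ‖v j - mixing W v i‖ ^ 2 := by
  simp_rw [sum_mul_norm_sub_mixing_sq hrow, sum_sub_distrib, PiLp.norm_sq_eq_of_L2]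
  rw [sum_comm (f := fun i j => W i j * ‖v j‖ ^ 2)]
  simp [← sum_mul, hcol]

variable (ι E) in
def sumZero : Submodule ℝ (PiLp 2 (fun _ : ι => E)) where
  carrier := {v | ∑ i, v i = 0}
  add_mem' hu hv := by simp_all [sum_add_distrib]
  zero_mem' := by simp
  smul_mem' r v hv := by simp_all [← smul_sum]

/-- If mixing dissipates no energy, each block equals the mixed value at every neighbour,
itself included since `W i i > 0`; so `v` is constant along edges. -/
theorem apply_eq_of_norm_le_norm_mixing (hnn : ∀ i j, 0 ≤ W i j) (hdiag : ∀ i, 0 < W i i)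
    (hrow : ∀ i, ∑ j, W i j = 1) (hcol : ∀ j, ∑ i, W i j = 1)
    (hconn : (SimpleGraph.fromRel fun i j => 0 < W i j).Connected)
    {v : PiLp 2 (fun _ : ι => E)} (hv : ‖v‖ ≤ ‖mixing W v‖) (i j : ι) : v i = v j := by
  have hterm_nonneg : ∀ i j, 0 ≤ W i j * ‖v j - mixing W v i‖ ^ 2 :=
    fun i j => mul_nonneg (hnn i j) (sq_nonneg _)
  have hgap : ∑ i, ∑ j, W i j * ‖v j - mixing W v i‖ ^ 2 = 0 :=
    le_antisymm (by nlinarith [norm_sq_sub_norm_mixing_sq hrow hcol v, norm_nonneg v])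
      (sum_nonneg fun i _ => sum_nonneg fun j _ => hterm_nonneg i j)
  have hterm : ∀ i j, W i j * ‖v j - mixing W v i‖ ^ 2 = 0 := fun i j =>
    (sum_eq_zero_iff_of_nonneg fun j _ => hterm_nonneg i j).mp
      ((sum_eq_zero_iff_of_nonneg fun i _ => sum_nonneg fun j _ => hterm_nonneg i j).mp hgap i
        (mem_univ i)) j (mem_univ j)
  have hfix : ∀ i j, 0 < W i j → v j = mixing W v i := fun i j hij => by
    simpa [hij.ne', sub_eq_zero] using hterm i j
  have hadj : ∀ i j, (SimpleGraph.fromRel fun i j => 0 < W i j).Adj i j → v i = v j := by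
    rintro i j ⟨-, hij | hji⟩
    · exact (hfix i i (hdiag i)).trans (hfix i j hij).symm
    · exact (hfix j j (hdiag j)).trans (hfix j i hji).symm |>.symm
  obtain ⟨walk⟩ := hconn.preconnected i j
  induction walk with
  | nil => rfl
  | cons h _ ih => exact (hadj _ _ h).trans ih

theorem norm_mixing_lt (hnn : ∀ i j, 0 ≤ W i j) (hdiag : ∀ i, 0 < W i i)
    (hrow : ∀ i, ∑ j, W i j = 1) (hcol : ∀ j, ∑ i, W i j = 1)
    (hconn : (SimpleGraph.fromRel fun i j => 0 < W i j).Connected)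
    {v : PiLp 2 (fun _ : ι => E)} (hv : v ∈ sumZero ι E) (hne : v ≠ 0) :
    ‖mixing W v‖ < ‖v‖ := by
  by_contra! hle
  have hconst := apply_eq_of_norm_le_norm_mixing hnn hdiag hrow hcol hconn hle
  refine hne (PiLp.ext fun i => ?_)
  have hsum : Fintype.card ι • v i = 0 := by
    rw [← card_univ, ← sum_const, ← hv]
    exact sum_congr rfl fun j _ => (hconst j i).symm
  rw [← Nat.cast_smul_eq_nsmul ℝ] at hsum
  have hcard : (Fintype.card ι : ℝ) ≠ 0 := Nat.cast_ne_zero.mpr (Fintype.card_pos_iff.mpr ⟨i⟩).ne'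
  simpa using (smul_eq_zero.mp hsum).resolve_left hcard

theorem exists_norm_mixing_le [FiniteDimensional ℝ E] (hnn : ∀ i j, 0 ≤ W i j)
    (hdiag : ∀ i, 0 < W i i) (hrow : ∀ i, ∑ j, W i j = 1) (hcol : ∀ j, ∑ i, W i j = 1)
    (hconn : (SimpleGraph.fromRel fun i j => 0 < W i j).Connected) :
    ∃ σ, 0 ≤ σ ∧ σ < 1 ∧ ∀ v ∈ sumZero ι E, ‖mixing W v‖ ≤ σ * ‖v‖ :=
  (sumZero ι E).exists_lt_one_forall_norm_le_of_norm_lt (mixing W)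
    fun _ hv hne => norm_mixing_lt hnn hdiag hrow hcol hconn hv hne

noncomputable def consensusError : PiLp 2 (fun _ : ι => E) →ₗ[ℝ] PiLp 2 (fun _ : ι => E) where
  toFun v := WithLp.toLp 2 fun i => v i - (Fintype.card ι : ℝ)⁻¹ • ∑ j, v j
  map_add' u v := by ext i; simp only [PiLp.add_apply, sum_add_distrib, smul_add]; abel
  map_smul' r v := by ext i; simp [← smul_sum, smul_sub, smul_comm r]

@[simp]
theorem consensusError_apply (v : PiLp 2 (fun _ : ι => E)) (i : ι) :
    consensusError v i = v i - (Fintype.card ι : ℝ)⁻¹ • ∑ j, v j := rfl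

theorem consensusError_mem_sumZero (v : PiLp 2 (fun _ : ι => E)) :
    consensusError v ∈ sumZero ι E := by
  change ∑ i, consensusError v i = 0
  rcases isEmpty_or_nonempty ι with hι | hι
  · simp
  · simp [sum_sub_distrib, ← Nat.cast_smul_eq_nsmul ℝ, smul_smul]

theorem consensusError_mixing (hrow : ∀ i, ∑ j, W i j = 1) (hcol : ∀ j, ∑ i, W i j = 1)
    (v : PiLp 2 (fun _ : ι => E)) :
    consensusError (mixing W v) = mixing W (consensusError v) := by
  ext i
  rw [consensusError_apply, sum_mixing_apply hcol, mixing_apply, mixing_apply]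
  simp only [consensusError_apply, smul_sub, sum_sub_distrib, ← sum_smul, hrow, one_smul]

theorem exists_forall_norm_consensusError_le [FiniteDimensional ℝ E]
    (hnn : ∀ i j, 0 ≤ W i j) (hdiag : ∀ i, 0 < W i i)
    (hrow : ∀ i, ∑ j, W i j = 1) (hcol : ∀ j, ∑ i, W i j = 1)
    (hconn : (SimpleGraph.fromRel fun i j => 0 < W i j).Connected)
    {u g : ℕ → PiLp 2 (fun _ : ι => E)} (hu : ∀ k, u (k + 1) = mixing W (u k) + g k) {G : ℝ}
    (hg : ∀ k, ‖consensusError (g k)‖ ≤ G) : ∃ C, ∀ k, ‖consensusError (u k)‖ ≤ C := by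
  obtain ⟨σ, hσ0, hσ1, hσ⟩ := exists_norm_mixing_le (E := E) hnn hdiag hrow hcol hconn
  refine exists_forall_norm_le_of_le_mul_add (G := G) hσ0 hσ1 fun k => ?_
  rw [hu, map_add, consensusError_mixing hrow hcol]
  exact (norm_add_le _ _).trans
    (add_le_add (hσ _ (consensusError_mem_sumZero _)) (hg k))

theorem sum_apply_of_tracking (hcol : ∀ j, ∑ i, W i j = 1) {D a : ℕ → PiLp 2 (fun _ : ι => E)}
    {b : PiLp 2 (fun _ : ι => E)} (h0 : D 0 = a 0 - b)
    (hD : ∀ k, D (k + 1) = mixing W (D k) + (a (k + 1) - a k)) (k : ℕ) :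
    ∑ i, D k i = ∑ i, a k i - ∑ i, b i := by
  induction k with
  | zero => simp [h0, sum_sub_distrib]
  | succ k ih =>
    simp only [hD, PiLp.add_apply, PiLp.sub_apply, sum_add_distrib, sum_sub_distrib,
      sum_mixing_apply hcol, ih]
    abel

theorem exists_forall_norm_consensusError_le_of_tracking [FiniteDimensional ℝ E]
    (hnn : ∀ i j, 0 ≤ W i j) (hdiag : ∀ i, 0 < W i i)
    (hrow : ∀ i, ∑ j, W i j = 1) (hcol : ∀ j, ∑ i, W i j = 1)
    (hconn : (SimpleGraph.fromRel fun i j => 0 < W i j).Connected)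
    {D a : ℕ → PiLp 2 (fun _ : ι => E)}
    (hD : ∀ k, D (k + 1) = mixing W (D k) + (a (k + 1) - a k)) {R : ℝ} (ha : ∀ k, ‖a k‖ ≤ R) :
    ∃ C, ∀ k, ‖consensusError (D k)‖ ≤ C := by
  set P := LinearMap.toContinuousLinearMap (consensusError (ι := ι) (E := E))
  refine exists_forall_norm_consensusError_le hnn hdiag hrow hcol hconn hD
    (G := ‖P‖ * (R + R)) fun k => ?_
  calc ‖consensusError (a (k + 1) - a k)‖ = ‖P (a (k + 1) - a k)‖ := rfl
    _ ≤ ‖P‖ * ‖a (k + 1) - a k‖ := P.le_opNorm _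
    _ ≤ ‖P‖ * (R + R) := by
        gcongr
        exact (norm_sub_le _ _).trans (add_le_add (ha _) (ha _))

end Consensus

open Consensus in
theorem bounded_sequences_general
    (N p : ℕ) (n : Fin N → ℕ)
    (X : ∀ i : Fin N, Set (EuclideanSpace ℝ (Fin (n i))))
    (hXcpt : ∀ i, IsCompact (X i))
    (A : ∀ i : Fin N, EuclideanSpace ℝ (Fin (n i)) →ₗ[ℝ] EuclideanSpace ℝ (Fin p))
    (bv : Fin N → EuclideanSpace ℝ (Fin p))
    (W : Matrix (Fin N) (Fin N) ℝ)
    (hWmem : ∀ i j, W i j ∈ Set.Ico (0 : ℝ) 1)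
    (hWdiag : ∀ i, 0 < W i i)
    (hWrow : ∀ i, ∑ j, W i j = 1)
    (hWcol : ∀ j, ∑ i, W i j = 1)
    (hWconn : (SimpleGraph.fromRel (fun i j : Fin N => 0 < W i j)).Connected)
    (c : ℝ)
    (x : ∀ i : Fin N, ℕ → EuclideanSpace ℝ (Fin (n i)))
    (d lam : Fin N → ℕ → EuclideanSpace ℝ (Fin p))
    (hx0 : ∀ i, x i 0 ∈ X i)
    (hd0 : ∀ i, d i 0 = A i (x i 0) - bv i)
    (hxmem : ∀ i k, x i (k + 1) ∈ X i)
    (hdup : ∀ i k, d i (k + 1) = (∑ j, W i j • d j k) + A i (x i (k + 1)) - A i (x i k))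
    (hlup : ∀ i k, lam i (k + 1) = (∑ j, W i j • lam j k) + c • d i (k + 1)) :
    (∃ C : ℝ, ∀ k, (∑ i, ‖x i k‖) ≤ C) ∧
    (∃ C : ℝ, ∀ k, (∑ i, ‖A i (x i k) - (N : ℝ)⁻¹ • ∑ j, d j k‖) ≤ C) ∧
    (∃ C : ℝ, ∀ k, (∑ i, ‖d i k - (N : ℝ)⁻¹ • ∑ j, d j k‖) ≤ C) ∧
    (∃ C : ℝ, ∀ k, (∑ i, ‖lam i k - (N : ℝ)⁻¹ • ∑ j, lam j k‖) ≤ C) := by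
  have hx : ∀ i k, x i k ∈ X i := fun i k => by cases k <;> simp [hx0, hxmem]
  have hWnn : ∀ i j, 0 ≤ W i j := fun i j => (hWmem i j).1
  let a k : PiLp 2 (fun _ : Fin N => EuclideanSpace ℝ (Fin p)) :=
    WithLp.toLp 2 fun i => A i (x i k)
  let D k : PiLp 2 (fun _ : Fin N => EuclideanSpace ℝ (Fin p)) := WithLp.toLp 2 fun i => d i k
  let L k : PiLp 2 (fun _ : Fin N => EuclideanSpace ℝ (Fin p)) := WithLp.toLp 2 fun i => lam i k
  have hD : ∀ k, D (k + 1) = mixing W (D k) + (a (k + 1) - a k) := fun k => by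
    ext i; simp only [D, a, hdup, mixing_apply, PiLp.add_apply, PiLp.sub_apply]; abel
  have hL : ∀ k, L (k + 1) = mixing W (L k) + c • D (k + 1) := fun k => by
    ext i; simp [L, D, hlup]
  obtain ⟨Ca, hCa⟩ := exists_forall_sum_norm_le_of_forall_mem
    (fun i => ((hXcpt i).image (A i).continuous_of_finiteDimensional).isBounded)
    fun i k => Set.mem_image_of_mem (A i) (hx i k)
  obtain ⟨Cd, hCd⟩ := exists_forall_norm_consensusError_le_of_tracking hWnn hWdiag hWrow hWcol
    hWconn hD fun k => (norm_le_sum_norm (a k)).trans (hCa k)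
  obtain ⟨Cl, hCl⟩ := exists_forall_norm_consensusError_le hWnn hWdiag hWrow hWcol hWconn hL
    (G := ‖c‖ * Cd) fun k => by rw [map_smul, norm_smul]; gcongr; exact hCd _
  refine ⟨exists_forall_sum_norm_le_of_forall_mem (fun i => (hXcpt i).isBounded) hx,
    ⟨2 * Ca + ∑ i, ‖bv i‖, fun k => ?_⟩, ⟨N * Cd, fun k => ?_⟩, ⟨N * Cl, fun k => ?_⟩⟩
  · have htrack := sum_apply_of_tracking hWcol (b := WithLp.toLp 2 bv)
      (by ext i; simp [D, a, hd0]) hD k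
    simpa using (sum_norm_sub_average_le htrack).trans (by gcongr; exact hCa k)
  · simpa using (sum_norm_le_card_mul_norm (consensusError (D k))).trans
      (by rw [Fintype.card_fin]; gcongr; exact hCd k)
  · simpa using (sum_norm_le_card_mul_norm (consensusError (L k))).trans
      (by rw [Fintype.card_fin]; gcongr; exact hCl k)

/-- **Bounded sequences (Lemma 3).**
Along the Tracking-ADMM iterations: (i) the sequences `(x_{i,k})_i` and `(z_{i,k})_i` are
bounded (`sup_k Σ_i ‖x_{i,k}‖ < ∞` and `sup_k Σ_i ‖z_{i,k}‖ < ∞`); (ii) the consensus-error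
sequences `(e^d_{i,k})_i` and `(e^λ_{i,k})_i` are bounded, where `d̄_k = (1/N) Σ_i d_{i,k}`,
`λ̄_k = (1/N) Σ_i λ_{i,k}`, `e^d_{i,k} = d_{i,k} − d̄_k`, `e^λ_{i,k} = λ_{i,k} − λ̄_k`, and
`z_{i,k} = A_i x_{i,k} − d̄_k`. -/
theorem bounded_sequences
    (N p : ℕ) (hN : 0 < N) (n : Fin N → ℕ)
    (f : ∀ i : Fin N, EuclideanSpace ℝ (Fin (n i)) → ℝ)
    (hf : ∀ i, ConvexOn ℝ Set.univ (f i))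
    (X : ∀ i : Fin N, Set (EuclideanSpace ℝ (Fin (n i))))
    (hXne : ∀ i, (X i).Nonempty) (hXcvx : ∀ i, Convex ℝ (X i))
    (hXcpt : ∀ i, IsCompact (X i))
    (A : ∀ i : Fin N, EuclideanSpace ℝ (Fin (n i)) →ₗ[ℝ] EuclideanSpace ℝ (Fin p))
    (bv : Fin N → EuclideanSpace ℝ (Fin p))
    (W : Matrix (Fin N) (Fin N) ℝ)
    (hWsym : W.IsSymm)
    (hWmem : ∀ i j, W i j ∈ Set.Ico (0 : ℝ) 1)
    (hWdiag : ∀ i, 0 < W i i)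
    (hWrow : ∀ i, ∑ j, W i j = 1)
    (hWcol : ∀ j, ∑ i, W i j = 1)
    (hWconn : (SimpleGraph.fromRel (fun i j : Fin N => 0 < W i j)).Connected)
    (c : ℝ) (hc : 0 < c)
    (x : ∀ i : Fin N, ℕ → EuclideanSpace ℝ (Fin (n i)))
    (d lam : Fin N → ℕ → EuclideanSpace ℝ (Fin p))
    (hx0 : ∀ i, x i 0 ∈ X i)
    (hd0 : ∀ i, d i 0 = A i (x i 0) - bv i)
    (hxmem : ∀ i k, x i (k + 1) ∈ X i)
    (hxmin : ∀ i k, ∀ y ∈ X i,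
      f i (x i (k + 1)) + ⟪∑ j, W i j • lam j k, A i (x i (k + 1))⟫
        + c / 2 * ‖A i (x i (k + 1)) - A i (x i k) + ∑ j, W i j • d j k‖ ^ 2
      ≤ f i y + ⟪∑ j, W i j • lam j k, A i y⟫
        + c / 2 * ‖A i y - A i (x i k) + ∑ j, W i j • d j k‖ ^ 2)
    (hdup : ∀ i k, d i (k + 1) = (∑ j, W i j • d j k) + A i (x i (k + 1)) - A i (x i k))
    (hlup : ∀ i k, lam i (k + 1) = (∑ j, W i j • lam j k) + c • d i (k + 1)) :
    (∃ C : ℝ, ∀ k, (∑ i, ‖x i k‖) ≤ C) ∧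
    (∃ C : ℝ, ∀ k, (∑ i, ‖A i (x i k) - (N : ℝ)⁻¹ • ∑ j, d j k‖) ≤ C) ∧
    (∃ C : ℝ, ∀ k, (∑ i, ‖d i k - (N : ℝ)⁻¹ • ∑ j, d j k‖) ≤ C) ∧
    (∃ C : ℝ, ∀ k, (∑ i, ‖lam i k - (N : ℝ)⁻¹ • ∑ j, lam j k‖) ≤ C) :=
  bounded_sequences_general N p n X hXcpt A bv W hWmem hWdiag hWrow hWcol hWconn c x d lam hx0 hd0
    hxmem hdup hlup
end

section
/- Local optimality descent (Proposition 4). For every iteration k ≥ 0 and every saddle point (x*, λ*) of the Lagrangian L, the Tracking-ADMM iterates satisfy N ‖λ̄_{k+1} − λ*‖² + 2c Σ_{i=1}^N (z_{i,k+1} − A_i x_i*)ᵀ (λ_{i,k+1} − λ̄_{k+1}) ≤ N ‖λ̄_k − λ*‖² − N ‖λ̄_{k+1} − λ̄_k‖². -/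
open Finset Filter Topology
open scoped RealInnerProductSpace

/-!
The local update is a proximal step whose multiplier update is exactly the gradient of the
proximal term, so first-order optimality says that `x_{i,k+1}` minimizes
`f_i + ⟪λ_{i,k+1}, A_i ·⟫` over `X_i`. Summed over the agents and played against the
saddle-point inequality for `x*`, this gives `Σ_i ⟪A_i x_{i,k+1} - A_i x_i*, λ_{i,k+1} - λ*⟫ ≤ 0`.
Since `W` is column stochastic, `Σ_i d_{i,k}` tracks the residual `Σ_i A_i x_{i,k} - b`, and the
averaged multiplier obeys `λ̄_{k+1} = λ̄_k + c d̄_{k+1}`; by feasibility of `x*`,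
`d̄_{k+1}` is the mean of `A_i x_{i,k+1} - A_i x_i*`. The claim is then an exact identity (the
three-point identity for `λ̄_{k+1}, λ̄_k, λ*` and centering of the cross term) plus that
nonpositive sum.
-/

theorem nonneg_of_forall_nonneg_add_mul {B C : ℝ}
    (h : ∀ t : ℝ, 0 < t → t ≤ 1 → 0 ≤ B + t * C) : 0 ≤ B := by
  have hlim : Tendsto (fun t : ℝ => B + t * C) (𝓝[>] 0) (𝓝 B) := by
    have : Tendsto (fun t : ℝ => B + t * C) (𝓝 0) (𝓝 (B + 0 * C)) :=
      (continuous_const.add (continuous_id.mul continuous_const)).tendsto 0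
    simpa using this.mono_left nhdsWithin_le_nhds
  refine ge_of_tendsto hlim ?_
  filter_upwards [Ioc_mem_nhdsGT one_pos] with t ht using h t ht.1 ht.2

theorem sum_sum_smul_eq_sum_of_sum_col_eq_one {ι R M : Type*} [Fintype ι] [Semiring R]
    [AddCommMonoid M] [Module R M] {W : ι → ι → R} (hW : ∀ j, ∑ i, W i j = 1) (v : ι → M) :
    ∑ i, ∑ j, W i j • v j = ∑ j, v j := by
  rw [sum_comm]
  exact sum_congr rfl fun j _ => by rw [← sum_smul, hW j, one_smul]

theorem sum_tracking_eq_sum_sub_sum {ι R M : Type*} [Fintype ι] [Ring R] [AddCommGroup M]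
    [Module R M] {W : ι → ι → R} (hW : ∀ j, ∑ i, W i j = 1) {d a : ι → ℕ → M} {b : ι → M}
    (hd0 : ∀ i, d i 0 = a i 0 - b i)
    (hd : ∀ i k, d i (k + 1) = (∑ j, W i j • d j k) + a i (k + 1) - a i k) (k : ℕ) :
    ∑ i, d i k = ∑ i, a i k - ∑ i, b i := by
  induction k with
  | zero => simp only [hd0, sum_sub_distrib]
  | succ k ih =>
    simp only [hd, sum_sub_distrib, sum_add_distrib,
      sum_sum_smul_eq_sum_of_sum_col_eq_one hW, ih]
    abel

section InnerProduct

variable {F : Type*} [NormedAddCommGroup F] [InnerProductSpace ℝ F]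

theorem ConvexOn.isMinOn_inner_of_isMinOn_prox {E : Type*} [AddCommGroup E] [Module ℝ E]
    {s : Set E} {f : E → ℝ} (hf : ConvexOn ℝ s f) (A : E →ₗ[ℝ] F) (c : ℝ)
    (l e : F) {x₀ : E} (hx₀ : x₀ ∈ s)
    (hmin : IsMinOn (fun y => f y + ⟪l, A y⟫ + c / 2 * ‖A y + e‖ ^ 2) s x₀) :
    IsMinOn (fun y => f y + ⟪l + c • (A x₀ + e), A y⟫) s x₀ := by
  refine isMinOn_iff.2 fun y hy => ?_
  set v := A y - A x₀
  suffices 0 ≤ f y - f x₀ + ⟪l + c • (A x₀ + e), v⟫ by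
    simp only [v, inner_sub_right] at this; linarith
  -- compare with the point `(1 - t) x₀ + t y` of `s` and let `t → 0⁺`
  refine nonneg_of_forall_nonneg_add_mul (C := c / 2 * ‖v‖ ^ 2) fun t ht0 ht1 => ?_
  have hmem : (1 - t) • x₀ + t • y ∈ s := hf.1 hx₀ hy (by linarith) ht0.le (by ring)
  have hconv : f ((1 - t) • x₀ + t • y) ≤ (1 - t) * f x₀ + t * f y :=
    hf.2 hx₀ hy (by linarith) ht0.le (by ring)
  have hA : A ((1 - t) • x₀ + t • y) = A x₀ + t • v := by
    simp only [map_add, map_smul, v]; module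
  have hle := isMinOn_iff.1 hmin _ hmem
  have hexp : ‖A x₀ + t • v + e‖ ^ 2
      = ‖A x₀ + e‖ ^ 2 + 2 * t * ⟪A x₀ + e, v⟫ + t ^ 2 * ‖v‖ ^ 2 := by
    rw [add_right_comm, norm_add_sq_real, real_inner_smul_right, norm_smul, mul_pow,
      Real.norm_eq_abs, sq_abs]
    ring
  rw [hA, hexp, inner_add_right, real_inner_smul_right] at hle
  rw [inner_add_left, real_inner_smul_left]
  refine nonneg_of_mul_nonneg_right ?_ ht0
  linarith

theorem eq_zero_of_forall_inner_le {r l : F} (h : ∀ μ, ⟪μ, r⟫ ≤ ⟪l, r⟫) : r = 0 := by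
  have := h (l + r)
  rw [inner_add_left] at this
  exact real_inner_self_nonpos.mp (by linarith)

theorem sum_inner_sub_sub_nonpos {ι : Type*} [Fintype ι] {φ φs : ι → ℝ} {u us lam : ι → F}
    {ls : F} (hmin : ∀ i, φ i + ⟪lam i, u i⟫ ≤ φs i + ⟪lam i, us i⟫)
    (hsaddle : ∑ i, φs i ≤ ∑ i, φ i + ⟪ls, ∑ i, u i - ∑ i, us i⟫) :
    ∑ i, ⟪u i - us i, lam i - ls⟫ ≤ 0 := by
  have hsum := sum_le_sum fun i (_ : i ∈ univ) => hmin i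
  simp only [sum_add_distrib] at hsum
  simp only [inner_sub_right, inner_sum] at hsaddle
  simp only [inner_sub_right, sum_sub_distrib, real_inner_comm ls,
    real_inner_comm (lam _)]
  linarith

theorem sum_inner_sub_mean_sub_mean {ι : Type*} [Fintype ι] (u v : ι → F) (w : F) :
    ∑ i, ⟪u i - (Fintype.card ι : ℝ)⁻¹ • ∑ j, u j, v i - (Fintype.card ι : ℝ)⁻¹ • ∑ j, v j⟫
      = ∑ i, ⟪u i, v i - w⟫ - ⟪∑ i, u i, (Fintype.card ι : ℝ)⁻¹ • ∑ j, v j - w⟫ := by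
  rcases isEmpty_or_nonempty ι with _ | _
  · simp
  have hN : (Fintype.card ι : ℝ) ≠ 0 := by positivity
  simp only [inner_sub_left, inner_sub_right, sum_sub_distrib, inner_smul_left,
    inner_smul_right, ← mul_sum, ← sum_inner, ← inner_sum, sum_const, card_univ,
    RCLike.conj_to_real]
  rw [← Nat.cast_smul_eq_nsmul ℝ, real_inner_smul_left]
  field_simp
  ring

theorem mean_dual_descent_identity {ι : Type*} [Fintype ι] [Nonempty ι] (c : ℝ)
    (u lam : ι → F) (lam₀ ls : F) (hlam : ∑ i, lam i = lam₀ + c • ∑ i, u i) :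
    (Fintype.card ι : ℝ) * ‖(Fintype.card ι : ℝ)⁻¹ • ∑ i, lam i - ls‖ ^ 2
        + 2 * c * ∑ i, ⟪u i - (Fintype.card ι : ℝ)⁻¹ • ∑ j, u j,
            lam i - (Fintype.card ι : ℝ)⁻¹ • ∑ j, lam j⟫
      = (Fintype.card ι : ℝ) * ‖(Fintype.card ι : ℝ)⁻¹ • lam₀ - ls‖ ^ 2
        - (Fintype.card ι : ℝ) * ‖(Fintype.card ι : ℝ)⁻¹ • ∑ i, lam i
            - (Fintype.card ι : ℝ)⁻¹ • lam₀‖ ^ 2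
        + 2 * c * ∑ i, ⟪u i, lam i - ls⟫ := by
  set N : ℝ := (Fintype.card ι : ℝ)
  set a := N⁻¹ • ∑ i, lam i
  set b := N⁻¹ • lam₀
  have hN : N ≠ 0 := by positivity
  have hstep : N • (a - b) = c • ∑ i, u i := by
    rw [← smul_sub, hlam, add_sub_cancel_left, smul_inv_smul₀ hN]
  have hthree := norm_sub_sq_real (a - ls) (a - b)
  rw [sub_sub_sub_cancel_left] at hthree
  have hinner : N * ⟪a - ls, a - b⟫ = c * ⟪∑ i, u i, a - ls⟫ := by
    rw [real_inner_comm, ← real_inner_smul_left, hstep, real_inner_smul_left]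
  rw [sum_inner_sub_mean_sub_mean u lam ls]
  linear_combination (-N) * hthree + 2 * hinner

end InnerProduct

theorem local_optimality_descent_general
    (N p : ℕ) (hN : 0 < N) (n : Fin N → ℕ)
    (f : ∀ i : Fin N, EuclideanSpace ℝ (Fin (n i)) → ℝ)
    (hf : ∀ i, ConvexOn ℝ Set.univ (f i))
    (X : ∀ i : Fin N, Set (EuclideanSpace ℝ (Fin (n i))))
    (hXcvx : ∀ i, Convex ℝ (X i))
    (A : ∀ i : Fin N, EuclideanSpace ℝ (Fin (n i)) →ₗ[ℝ] EuclideanSpace ℝ (Fin p))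
    (bv : Fin N → EuclideanSpace ℝ (Fin p))
    (W : Matrix (Fin N) (Fin N) ℝ)
    (hWcol : ∀ j, ∑ i, W i j = 1)
    (c : ℝ) (hc : 0 < c)
    (x : ∀ i : Fin N, ℕ → EuclideanSpace ℝ (Fin (n i)))
    (d lam : Fin N → ℕ → EuclideanSpace ℝ (Fin p))
    (hd0 : ∀ i, d i 0 = A i (x i 0) - bv i)
    (hxmem : ∀ i k, x i (k + 1) ∈ X i)
    (hxmin : ∀ i k, ∀ y ∈ X i,
      f i (x i (k + 1)) + ⟪∑ j, W i j • lam j k, A i (x i (k + 1))⟫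
        + c / 2 * ‖A i (x i (k + 1)) - A i (x i k) + ∑ j, W i j • d j k‖ ^ 2
      ≤ f i y + ⟪∑ j, W i j • lam j k, A i y⟫
        + c / 2 * ‖A i y - A i (x i k) + ∑ j, W i j • d j k‖ ^ 2)
    (hdup : ∀ i k, d i (k + 1) = (∑ j, W i j • d j k) + A i (x i (k + 1)) - A i (x i k))
    (hlup : ∀ i k, lam i (k + 1) = (∑ j, W i j • lam j k) + c • d i (k + 1))
    -- saddle point (x*, λ*) of the Lagrangian
    (xs : ∀ i, EuclideanSpace ℝ (Fin (n i))) (ls : EuclideanSpace ℝ (Fin p))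
    (hxs : ∀ i, xs i ∈ X i)
    (hsaddle1 : ∀ μ : EuclideanSpace ℝ (Fin p),
      (∑ i, f i (xs i)) + ⟪μ, (∑ i, A i (xs i)) - ∑ i, bv i⟫
        ≤ (∑ i, f i (xs i)) + ⟪ls, (∑ i, A i (xs i)) - ∑ i, bv i⟫)
    (hsaddle2 : ∀ y : (∀ i, EuclideanSpace ℝ (Fin (n i))), (∀ i, y i ∈ X i) →
      (∑ i, f i (xs i)) + ⟪ls, (∑ i, A i (xs i)) - ∑ i, bv i⟫
        ≤ (∑ i, f i (y i)) + ⟪ls, (∑ i, A i (y i)) - ∑ i, bv i⟫) :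
    ∀ k,
      (N : ℝ) * ‖((N : ℝ)⁻¹ • ∑ i, lam i (k + 1)) - ls‖ ^ 2
        + 2 * c * ∑ i,
            ⟪(A i (x i (k + 1)) - (N : ℝ)⁻¹ • ∑ j, d j (k + 1)) - A i (xs i),
              lam i (k + 1) - (N : ℝ)⁻¹ • ∑ j, lam j (k + 1)⟫
      ≤ (N : ℝ) * ‖((N : ℝ)⁻¹ • ∑ i, lam i k) - ls‖ ^ 2
        - (N : ℝ) * ‖((N : ℝ)⁻¹ • ∑ i, lam i (k + 1)) - (N : ℝ)⁻¹ • ∑ i, lam i k‖ ^ 2 := by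
  intro k
  have : Nonempty (Fin N) := ⟨⟨0, hN⟩⟩
  have hfeas : ∑ i, bv i = ∑ i, A i (xs i) :=
    (sub_eq_zero.1 <| eq_zero_of_forall_inner_le fun μ =>
      (add_le_add_iff_left _).1 (hsaddle1 μ)).symm
  have hd : ∑ i, d i (k + 1) = ∑ i, (A i (x i (k + 1)) - A i (xs i)) := by
    rw [sum_tracking_eq_sum_sub_sum (a := fun i k => A i (x i k)) hWcol hd0 hdup, hfeas,
      sum_sub_distrib]
  have hlam :
      ∑ i, lam i (k + 1) = ∑ i, lam i k + c • ∑ i, (A i (x i (k + 1)) - A i (xs i)) := by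
    simp only [hlup, sum_add_distrib, sum_sum_smul_eq_sum_of_sum_col_eq_one hWcol, ← smul_sum,
      hd]
  have hmin : ∀ i, IsMinOn (fun y => f i y + ⟪lam i (k + 1), A i y⟫) (X i) (x i (k + 1)) := by
    intro i
    have := ((hf i).subset (Set.subset_univ _) (hXcvx i)).isMinOn_inner_of_isMinOn_prox (A i) c
      (∑ j, W i j • lam j k) (∑ j, W i j • d j k - A i (x i k)) (hxmem i k)
      (isMinOn_iff.2 fun y hy => by
        simpa only [← add_sub_assoc, sub_add_eq_add_sub] using hxmin i k y hy)
    convert this using 4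
    rw [hlup, hdup]
    module
  have hneg := sum_inner_sub_sub_nonpos (fun i => isMinOn_iff.1 (hmin i) _ (hxs i)) (by
    have := hsaddle2 _ fun i => hxmem i k
    rwa [hfeas, sub_self, inner_zero_right, add_zero] at this)
  have key := mean_dual_descent_identity c _ _ _ ls hlam
  simp only [Fintype.card_fin, ← hd] at key
  simp only [sub_right_comm _ _ (A _ (xs _)), key]
  have := mul_nonpos_of_nonneg_of_nonpos (by positivity : 0 ≤ 2 * c) hneg
  linarith

/-- **Local optimality descent (Proposition 4).**
For every iteration `k ≥ 0` and every saddle point `(x*, λ*)` of the Lagrangian `L`,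
the Tracking-ADMM iterates satisfy
`N ‖λ̄_{k+1} − λ*‖² + 2c Σ_i (z_{i,k+1} − A_i x_i*)ᵀ (λ_{i,k+1} − λ̄_{k+1})
  ≤ N ‖λ̄_k − λ*‖² − N ‖λ̄_{k+1} − λ̄_k‖²`,
where `λ̄_k = (1/N) Σ_i λ_{i,k}`, `d̄_k = (1/N) Σ_i d_{i,k}`, `z_{i,k} = A_i x_{i,k} − d̄_k`. -/
theorem local_optimality_descent
    (N p : ℕ) (hN : 0 < N) (n : Fin N → ℕ)
    (f : ∀ i : Fin N, EuclideanSpace ℝ (Fin (n i)) → ℝ)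
    (hf : ∀ i, ConvexOn ℝ Set.univ (f i))
    (X : ∀ i : Fin N, Set (EuclideanSpace ℝ (Fin (n i))))
    (hXne : ∀ i, (X i).Nonempty) (hXcvx : ∀ i, Convex ℝ (X i))
    (hXcpt : ∀ i, IsCompact (X i))
    (A : ∀ i : Fin N, EuclideanSpace ℝ (Fin (n i)) →ₗ[ℝ] EuclideanSpace ℝ (Fin p))
    (bv : Fin N → EuclideanSpace ℝ (Fin p))
    (W : Matrix (Fin N) (Fin N) ℝ)
    (hWrow : ∀ i, ∑ j, W i j = 1)
    (hWcol : ∀ j, ∑ i, W i j = 1)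
    (c : ℝ) (hc : 0 < c)
    (x : ∀ i : Fin N, ℕ → EuclideanSpace ℝ (Fin (n i)))
    (d lam : Fin N → ℕ → EuclideanSpace ℝ (Fin p))
    (hx0 : ∀ i, x i 0 ∈ X i)
    (hd0 : ∀ i, d i 0 = A i (x i 0) - bv i)
    (hxmem : ∀ i k, x i (k + 1) ∈ X i)
    (hxmin : ∀ i k, ∀ y ∈ X i,
      f i (x i (k + 1)) + ⟪∑ j, W i j • lam j k, A i (x i (k + 1))⟫
        + c / 2 * ‖A i (x i (k + 1)) - A i (x i k) + ∑ j, W i j • d j k‖ ^ 2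
      ≤ f i y + ⟪∑ j, W i j • lam j k, A i y⟫
        + c / 2 * ‖A i y - A i (x i k) + ∑ j, W i j • d j k‖ ^ 2)
    (hdup : ∀ i k, d i (k + 1) = (∑ j, W i j • d j k) + A i (x i (k + 1)) - A i (x i k))
    (hlup : ∀ i k, lam i (k + 1) = (∑ j, W i j • lam j k) + c • d i (k + 1))
    -- saddle point (x*, λ*) of the Lagrangian
    (xs : ∀ i, EuclideanSpace ℝ (Fin (n i))) (ls : EuclideanSpace ℝ (Fin p))
    (hxs : ∀ i, xs i ∈ X i)
    (hsaddle1 : ∀ μ : EuclideanSpace ℝ (Fin p),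
      (∑ i, f i (xs i)) + ⟪μ, (∑ i, A i (xs i)) - ∑ i, bv i⟫
        ≤ (∑ i, f i (xs i)) + ⟪ls, (∑ i, A i (xs i)) - ∑ i, bv i⟫)
    (hsaddle2 : ∀ y : (∀ i, EuclideanSpace ℝ (Fin (n i))), (∀ i, y i ∈ X i) →
      (∑ i, f i (xs i)) + ⟪ls, (∑ i, A i (xs i)) - ∑ i, bv i⟫
        ≤ (∑ i, f i (y i)) + ⟪ls, (∑ i, A i (y i)) - ∑ i, bv i⟫) :
    ∀ k,
      (N : ℝ) * ‖((N : ℝ)⁻¹ • ∑ i, lam i (k + 1)) - ls‖ ^ 2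
        + 2 * c * ∑ i,
            ⟪(A i (x i (k + 1)) - (N : ℝ)⁻¹ • ∑ j, d j (k + 1)) - A i (xs i),
              lam i (k + 1) - (N : ℝ)⁻¹ • ∑ j, lam j (k + 1)⟫
      ≤ (N : ℝ) * ‖((N : ℝ)⁻¹ • ∑ i, lam i k) - ls‖ ^ 2
        - (N : ℝ) * ‖((N : ℝ)⁻¹ • ∑ i, lam i (k + 1)) - (N : ℝ)⁻¹ • ∑ i, lam i k‖ ^ 2 :=
  local_optimality_descent_general N p hN n f hf X hXcvx A bv W hWcol c hc x d lam hd0 hxmem hxmin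
    hdup hlup xs ls hxs hsaddle1 hsaddle2
end

section
/- Lyapunov matrix relations. Let S ∈ ℝ^{m×m} be symmetric with all eigenvalues in the open interval (−1,1) (so that I − S is invertible). Define the block matrices F = [[S, S],[0, S]] ∈ ℝ^{2m×2m}, G = [[I],[I]] ∈ ℝ^{2m×m}, H = [I, 0] ∈ ℝ^{m×2m}, and P = [[2I, (I−S)^{−1} − 2I], [(I−S)^{−1} − 2I, (I−S)^{−2} − 2(I−S)^{−1} + 2I]] ∈ ℝ^{2m×2m}. Then Gᵀ P (I − F) = H and Gᵀ P G = (I − S)^{−2}. -/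
open Matrix

/-! With `A = (I - S)⁻¹` the block row `Gᵀ P` collapses to `[A, A² - A]`, and both identities
then reduce to `A (I - S) = I`, which holds because `1` is not in the spectrum of `S`. -/

namespace Matrix

variable {n R : Type*} [DecidableEq n] [Ring R]

lemma one_sub_fromBlocks_self_self_zero_self (S : Matrix n n R) :
    1 - fromBlocks S S 0 S = fromBlocks (1 - S) (-S) 0 (1 - S) := by
  rw [← fromBlocks_one, sub_eq_add_neg, fromBlocks_neg, fromBlocks_add, neg_zero, add_zero,
    zero_add, ← sub_eq_add_neg]

variable [Fintype n]

lemma fromCols_one_one_mul_fromBlocks (A : Matrix n n R) :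
    (fromCols 1 1 : Matrix n (n ⊕ n) R) * fromBlocks 2 (A - 2) (A - 2) (A ^ 2 - 2 * A + 2) =
      fromCols A (A ^ 2 - A) := by
  rw [fromCols_mul_fromBlocks]
  congr 1 <;> noncomm_ring

lemma fromCols_mul_fromBlocks_one_sub {A S : Matrix n n R} (hA : A * (1 - S) = 1) :
    fromCols A (A ^ 2 - A) * fromBlocks (1 - S) (-S) 0 (1 - S) = fromCols 1 0 := by
  rw [fromCols_mul_fromBlocks, mul_zero, add_zero, hA]
  congr 1
  calc A * -S + (A ^ 2 - A) * (1 - S) = A * (A * (1 - S)) - A := by noncomm_ring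
    _ = 0 := by rw [hA, mul_one, sub_self]

lemma fromCols_mul_fromRows_one_one (A B : Matrix n n R) :
    fromCols A B * (fromRows 1 1 : Matrix (n ⊕ n) n R) = A + B := by
  rw [fromCols_mul_fromRows, mul_one, mul_one]

end Matrix

theorem lyapunov_matrix_relations_general
    (m : ℕ) (S : Matrix (Fin m) (Fin m) ℝ)
    (hspec : ∀ μ ∈ spectrum ℝ S, μ ∈ Set.Ioo (-1 : ℝ) 1) :
    let F : Matrix (Fin m ⊕ Fin m) (Fin m ⊕ Fin m) ℝ := Matrix.fromBlocks S S 0 S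
    let G : Matrix (Fin m ⊕ Fin m) (Fin m) ℝ := Matrix.fromRows 1 1
    let H : Matrix (Fin m) (Fin m ⊕ Fin m) ℝ := Matrix.fromCols 1 0
    let P : Matrix (Fin m ⊕ Fin m) (Fin m ⊕ Fin m) ℝ :=
      Matrix.fromBlocks 2 ((1 - S)⁻¹ - 2) ((1 - S)⁻¹ - 2)
        ((1 - S)⁻¹ ^ 2 - 2 * (1 - S)⁻¹ + 2)
    Gᵀ * P * (1 - F) = H ∧ Gᵀ * P * G = (1 - S)⁻¹ ^ 2 := by
  dsimp only
  have hunit : IsUnit (1 - S) := by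
    have h1 : (1 : ℝ) ∉ spectrum ℝ S := fun h ↦ (lt_irrefl 1) (hspec 1 h).2
    simpa using spectrum.notMem_iff.mp h1
  have hinv : (1 - S)⁻¹ * (1 - S) = 1 :=
    nonsing_inv_mul _ ((isUnit_iff_isUnit_det _).mp hunit)
  have hGP : (fromRows 1 1 : Matrix (Fin m ⊕ Fin m) (Fin m) ℝ)ᵀ *
      fromBlocks 2 ((1 - S)⁻¹ - 2) ((1 - S)⁻¹ - 2) ((1 - S)⁻¹ ^ 2 - 2 * (1 - S)⁻¹ + 2) =
      fromCols (1 - S)⁻¹ ((1 - S)⁻¹ ^ 2 - (1 - S)⁻¹) := by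
    rw [transpose_fromRows, transpose_one, fromCols_one_one_mul_fromBlocks]
  refine ⟨?_, ?_⟩
  · rw [hGP, one_sub_fromBlocks_self_self_zero_self, fromCols_mul_fromBlocks_one_sub hinv]
  · rw [hGP, fromCols_mul_fromRows_one_one, add_sub_cancel]

/-- **Lyapunov matrix relations.**
Let `S ∈ ℝ^{m×m}` be symmetric with all eigenvalues in `(−1,1)`. With the block matrices
`F = [[S,S],[0,S]]`, `G = [[I],[I]]`, `H = [I, 0]` and
`P = [[2I, (I−S)⁻¹ − 2I], [(I−S)⁻¹ − 2I, (I−S)⁻² − 2(I−S)⁻¹ + 2I]]`,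
one has `Gᵀ P (I − F) = H` and `Gᵀ P G = (I − S)⁻²`. -/
theorem lyapunov_matrix_relations
    (m : ℕ) (S : Matrix (Fin m) (Fin m) ℝ)
    (hS : S.IsHermitian)
    (hspec : ∀ μ ∈ spectrum ℝ S, μ ∈ Set.Ioo (-1 : ℝ) 1) :
    let F : Matrix (Fin m ⊕ Fin m) (Fin m ⊕ Fin m) ℝ := Matrix.fromBlocks S S 0 S
    let G : Matrix (Fin m ⊕ Fin m) (Fin m) ℝ := Matrix.fromRows 1 1
    let H : Matrix (Fin m) (Fin m ⊕ Fin m) ℝ := Matrix.fromCols 1 0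
    let P : Matrix (Fin m ⊕ Fin m) (Fin m ⊕ Fin m) ℝ :=
      Matrix.fromBlocks 2 ((1 - S)⁻¹ - 2) ((1 - S)⁻¹ - 2)
        ((1 - S)⁻¹ ^ 2 - 2 * (1 - S)⁻¹ + 2)
    Gᵀ * P * (1 - F) = H ∧ Gᵀ * P * G = (1 - S)⁻¹ ^ 2 :=
  lyapunov_matrix_relations_general m S hspec
end

section
/- Positive definiteness of the Lyapunov matrix P. Let S ∈ ℝ^{m×m} be symmetric with all eigenvalues in the open interval (−1,1). Then the block matrix P = [[2I, (I−S)^{−1} − 2I], [(I−S)^{−1} − 2I, (I−S)^{−2} − 2(I−S)^{−1} + 2I]] ∈ ℝ^{2m×2m} is positive definite. -/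
/-!
With `A = (I - S)⁻¹`, twice the block matrix is the Gram matrix `Nᴴ N` of the block upper
triangular matrix `N = [[2I, A - 2I], [0, A]]`, which is invertible because `A` is.
-/

open Matrix
open scoped ComplexOrder

section

variable {𝕜 n : Type*} [RCLike 𝕜] [Fintype n] [DecidableEq n]

theorem conjTranspose_mul_self_fromBlocks_two_of_isHermitian {A : Matrix n n 𝕜}
    (hA : A.IsHermitian) :
    (fromBlocks 2 (A - 2) 0 A)ᴴ * fromBlocks 2 (A - 2) 0 A =
      (2 : 𝕜) • fromBlocks 2 (A - 2) (A - 2) (A ^ 2 - 2 * A + 2) := by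
  rw [fromBlocks_conjTranspose, fromBlocks_multiply, two_smul, fromBlocks_add]
  simp only [conjTranspose_sub, hA.eq, conjTranspose_ofNat, conjTranspose_zero]
  congr 1 <;> noncomm_ring

theorem posDef_fromBlocks_two_of_isHermitian_of_isUnit {A : Matrix n n 𝕜}
    (hA : A.IsHermitian) (hAu : IsUnit A) :
    (fromBlocks 2 (A - 2) (A - 2) (A ^ 2 - 2 * A + 2)).PosDef := by
  set N : Matrix (n ⊕ n) (n ⊕ n) 𝕜 := fromBlocks 2 (A - 2) 0 A
  have h2 : IsUnit (2 : Matrix n n 𝕜) := (IsUnit.mk0 (2 : 𝕜) two_ne_zero).map (algebraMap 𝕜 _)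
  have hN : IsUnit N := by
    rw [isUnit_iff_isUnit_det, det_fromBlocks_zero₂₁, IsUnit.mul_iff, ← isUnit_iff_isUnit_det,
      ← isUnit_iff_isUnit_det]
    exact ⟨h2, hAu⟩
  have := (PosDef.conjTranspose_mul_self N (mulVec_injective_of_isUnit hN)).smul
    (a := (2 : 𝕜)⁻¹) (by norm_num)
  rwa [conjTranspose_mul_self_fromBlocks_two_of_isHermitian hA, inv_smul_smul₀ two_ne_zero] at this

end

/-- **Positive definiteness of the Lyapunov matrix `P`.**
Let `S ∈ ℝ^{m×m}` be symmetric with all eigenvalues in `(−1,1)`. Then the block matrix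
`P = [[2I, (I−S)⁻¹ − 2I], [(I−S)⁻¹ − 2I, (I−S)⁻² − 2(I−S)⁻¹ + 2I]]` is positive definite. -/
theorem lyapunov_matrix_posdef
    (m : ℕ) (S : Matrix (Fin m) (Fin m) ℝ)
    (hS : S.IsHermitian)
    (hspec : ∀ μ ∈ spectrum ℝ S, μ ∈ Set.Ioo (-1 : ℝ) 1) :
    (Matrix.fromBlocks (2 : Matrix (Fin m) (Fin m) ℝ)
      ((1 - S)⁻¹ - 2) ((1 - S)⁻¹ - 2)
      ((1 - S)⁻¹ ^ 2 - 2 * (1 - S)⁻¹ + 2)).PosDef := by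
  have hunit : IsUnit (1 - S) := by
    simpa using spectrum.notMem_iff.mp fun h => (hspec 1 h).2.false
  exact posDef_fromBlocks_two_of_isHermitian_of_isUnit (isHermitian_one.sub hS).inv
    (isUnit_nonsing_inv_iff.mpr hunit)
end

section
/- Strict Lyapunov decrease matrix. Let S ∈ ℝ^{m×m} be symmetric with all eigenvalues in the open interval (−1/3, 1). With F = [[S, S],[0, S]] ∈ ℝ^{2m×2m} and P = [[2I, (I−S)^{−1} − 2I], [(I−S)^{−1} − 2I, (I−S)^{−2} − 2(I−S)^{−1} + 2I]] ∈ ℝ^{2m×2m}, the matrix P − Fᵀ P F equals the block matrix [[2I − 2S², S − I], [S − I, I]] and is positive definite. -/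
/-! For `A = (1 - S)⁻¹` one has `S A S = A - 1 - S` and `S A² S = A² - 2A + 1`, which gives the
block form of `P - Fᵀ P F`. Its Schur complement with respect to the identity block is
`2 - 2S² - (S - 1)² = (1 - S)(1 + 3S)`, positive definite by the spectral mapping theorem because
`(1 - x)(1 + 3x) > 0` on `(-1/3, 1)`. -/

open Matrix
open scoped ComplexOrder

namespace Matrix

variable {m n 𝕜 : Type*} [Fintype m] [Fintype n] [DecidableEq m] [DecidableEq n] [RCLike 𝕜]

theorem posDef_iff_posSemidef_and_isUnit {X : Matrix n n 𝕜} :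
    X.PosDef ↔ X.PosSemidef ∧ IsUnit X :=
  ⟨fun h => ⟨h.posSemidef, h.isUnit⟩, fun h => h.1.posDef_iff_isUnit.2 h.2⟩

theorem PosDef.fromBlocks₂₂_posDef_iff (A : Matrix m m 𝕜) (B : Matrix m n 𝕜)
    {D : Matrix n n 𝕜} (hD : D.PosDef) :
    (fromBlocks A B Bᴴ D).PosDef ↔ (A - B * D⁻¹ * Bᴴ).PosDef := by
  have := hD.isUnit.invertible
  rw [posDef_iff_posSemidef_and_isUnit, posDef_iff_posSemidef_and_isUnit, hD.fromBlocks₂₂,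
    isUnit_fromBlocks_iff_of_invertible₂₂, invOf_eq_nonsing_inv]

open scoped MatrixOrder in
theorem IsHermitian.posDef_cfc {A : Matrix n n 𝕜} (hA : A.IsHermitian) {f : ℝ → ℝ}
    (hf : ∀ x ∈ spectrum ℝ A, 0 < f x) : (cfc f A).PosDef :=
  isStrictlyPositive_iff_posDef.1 <|
    (cfc_isStrictlyPositive_iff f A (finite_real_spectrum.continuousOn f) hA).2 hf

theorem fromBlocks_sub_transpose_mul_mul_eq {R : Type*} [Ring R] {S A : Matrix n n R}
    (hS : Sᵀ = S) (hA : A * (1 - S) = 1) (hA' : (1 - S) * A = 1) :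
    fromBlocks 2 (A - 2) (A - 2) (A ^ 2 - 2 * A + 2) -
        (fromBlocks S S 0 S)ᵀ * fromBlocks 2 (A - 2) (A - 2) (A ^ 2 - 2 * A + 2) *
          fromBlocks S S 0 S =
      fromBlocks (2 - 2 * S ^ 2) (S - 1) (S - 1) 1 := by
  have hSAS : S * A * S = A - 1 - S := by
    linear_combination (norm := noncomm_ring) -(S * hA) - hA'
  have hSA2S : S * A ^ 2 * S = A ^ 2 - 2 * A + 1 := by
    linear_combination (norm := noncomm_ring) -(S * A * hA) - hA' * A + hA'
  rw [fromBlocks_transpose, transpose_zero, hS, fromBlocks_multiply, fromBlocks_multiply,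
    sub_eq_iff_eq_add, fromBlocks_add]
  simp only [← one_add_one_eq_two]
  congr 1
  · noncomm_ring
  · linear_combination (norm := noncomm_ring) -hSAS
  · linear_combination (norm := noncomm_ring) -hSAS
  · linear_combination (norm := noncomm_ring) -hSA2S

end Matrix

/-- **Strict Lyapunov decrease matrix.**
Let `S ∈ ℝ^{m×m}` be symmetric with all eigenvalues in `(−1/3, 1)`. With
`F = [[S,S],[0,S]]` and `P = [[2I, (I−S)⁻¹ − 2I], [(I−S)⁻¹ − 2I, (I−S)⁻² − 2(I−S)⁻¹ + 2I]]`,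
the matrix `P − Fᵀ P F` equals the block matrix `[[2I − 2S², S − I], [S − I, I]]` and is
positive definite. -/
theorem strict_lyapunov_decrease
    (m : ℕ) (S : Matrix (Fin m) (Fin m) ℝ)
    (hS : S.IsHermitian)
    (hspec : ∀ μ ∈ spectrum ℝ S, μ ∈ Set.Ioo (-(1 / 3) : ℝ) 1) :
    let F : Matrix (Fin m ⊕ Fin m) (Fin m ⊕ Fin m) ℝ := Matrix.fromBlocks S S 0 S
    let P : Matrix (Fin m ⊕ Fin m) (Fin m ⊕ Fin m) ℝ :=
      Matrix.fromBlocks 2 ((1 - S)⁻¹ - 2) ((1 - S)⁻¹ - 2)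
        ((1 - S)⁻¹ ^ 2 - 2 * (1 - S)⁻¹ + 2)
    P - Fᵀ * P * F = Matrix.fromBlocks (2 - 2 * S ^ 2) (S - 1) (S - 1) 1 ∧
      (P - Fᵀ * P * F).PosDef := by
  intro F P
  have hST : Sᵀ = S := (conjTranspose_eq_transpose_of_trivial S).symm.trans hS.eq
  have hunit : IsUnit (1 - S).det := by
    rw [← isUnit_iff_isUnit_det]
    simpa using spectrum.notMem_iff.1 fun h => (hspec 1 h).2.false
  have hdiff : P - Fᵀ * P * F = fromBlocks (2 - 2 * S ^ 2) (S - 1) (S - 1) 1 :=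
    fromBlocks_sub_transpose_mul_mul_eq hST (nonsing_inv_mul _ hunit) (mul_nonsing_inv _ hunit)
  refine ⟨hdiff, hdiff ▸ ?_⟩
  have hS1 : (S - 1)ᴴ = S - 1 := by rw [conjTranspose_sub, hS.eq, conjTranspose_one]
  have hschur : 2 - 2 * S ^ 2 - (S - 1) * 1⁻¹ * (S - 1)ᴴ =
      cfc (fun x : ℝ => (1 - x) * (1 + 3 * x)) S := by
    rw [cfc_mul .., cfc_sub .., cfc_add .., cfc_const_mul .., cfc_id' .., cfc_const_one ..,
      inv_one, mul_one, hS1]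
    simp only [← one_add_one_eq_two, ofNat_smul_eq_nsmul ℝ 3]
    noncomm_ring
  have hpos := (PosDef.one.fromBlocks₂₂_posDef_iff (2 - 2 * S ^ 2) (S - 1)).2
    (hschur ▸ hS.posDef_cfc fun x hx => mul_pos (by linarith [(hspec x hx).2])
      (by linarith [(hspec x hx).1]))
  rwa [hS1] at hpos
end

section
/- Lagrangian-minimizer characterization of the Tracking-ADMM primal step. Let f : ℝ^n → ℝ be convex, X ⊆ ℝ^n convex, A ∈ ℝ^{p×n}, c > 0, and let ℓ, δ ∈ ℝ^p and x̂ ∈ ℝ^n. Suppose x⁺ ∈ X minimizes over X the map x ↦ f(x) + ℓᵀ A x + (c/2)‖A x − A x̂ + δ‖², and define d⁺ = δ + A x⁺ − A x̂ and λ⁺ = ℓ + c d⁺. Then for every x ∈ X: f(x⁺) + λ⁺ᵀ A x⁺ ≤ f(x) + λ⁺ᵀ A x; in particular, for any vector β ∈ ℝ^p, x⁺ minimizes the map x ↦ f(x) + λ⁺ᵀ(A x − β) over X. -/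
open Finset
open scoped RealInnerProductSpace

/-- **Lagrangian-minimizer characterization of the Tracking-ADMM primal step.**
If `x⁺ ∈ X` minimizes `x ↦ f(x) + ℓᵀAx + (c/2)‖Ax − Ax̂ + δ‖²` over the convex set `X`,
and `d⁺ = δ + Ax⁺ − Ax̂`, `λ⁺ = ℓ + c d⁺`, then for every `x ∈ X`
`f(x⁺) + λ⁺ᵀAx⁺ ≤ f(x) + λ⁺ᵀAx`; in particular, for any `β ∈ ℝ^p`, `x⁺` minimizes
`x ↦ f(x) + λ⁺ᵀ(Ax − β)` over `X`. -/
theorem primal_step_characterization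
    (nn pp : ℕ)
    (f : EuclideanSpace ℝ (Fin nn) → ℝ) (hf : ConvexOn ℝ Set.univ f)
    (X : Set (EuclideanSpace ℝ (Fin nn))) (hX : Convex ℝ X)
    (A : EuclideanSpace ℝ (Fin nn) →ₗ[ℝ] EuclideanSpace ℝ (Fin pp))
    (c : ℝ) (hc : 0 < c)
    (l δ : EuclideanSpace ℝ (Fin pp)) (xh : EuclideanSpace ℝ (Fin nn))
    (xp : EuclideanSpace ℝ (Fin nn)) (hxpX : xp ∈ X)
    (hmin : ∀ y ∈ X,
      f xp + ⟪l, A xp⟫ + c / 2 * ‖A xp - A xh + δ‖ ^ 2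
        ≤ f y + ⟪l, A y⟫ + c / 2 * ‖A y - A xh + δ‖ ^ 2) :
    (∀ y ∈ X,
      f xp + ⟪l + c • (δ + A xp - A xh), A xp⟫
        ≤ f y + ⟪l + c • (δ + A xp - A xh), A y⟫) ∧
    (∀ β : EuclideanSpace ℝ (Fin pp), ∀ y ∈ X,
      f xp + ⟪l + c • (δ + A xp - A xh), A xp - β⟫
        ≤ f y + ⟪l + c • (δ + A xp - A xh), A y - β⟫) := by
  set d : EuclideanSpace ℝ (Fin pp) := δ + A xp - A xh with hd
  have main : ∀ y ∈ X,
      f xp + ⟪l + c • d, A xp⟫ ≤ f y + ⟪l + c • d, A y⟫ := by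
    intro y hy
    set v : EuclideanSpace ℝ (Fin pp) := A y - A xp with hv
    set K : ℝ := c / 2 * ‖v‖ ^ 2 with hK
    have hKnn : 0 ≤ K := by positivity
    set D : ℝ := (f y + ⟪l + c • d, A y⟫) - (f xp + ⟪l + c • d, A xp⟫) with hD
    have hDeq : D = f y - f xp + ⟪l, v⟫ + c * ⟪d, v⟫ := by
      simp only [hD, hv, inner_add_left, inner_sub_right, real_inner_smul_left]
      ring
    have key : ∀ t : ℝ, 0 < t → t ≤ 1 → 0 ≤ D + t * K := by
      intro t ht0 ht1
      have hxt : (1 - t) • xp + t • y ∈ X :=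
        hX hxpX hy (by linarith) (le_of_lt ht0) (by ring)
      have hA : A ((1 - t) • xp + t • y) = A xp + t • v := by
        simp only [map_add, map_smul, hv]
        module
      have hq : A ((1 - t) • xp + t • y) - A xh + δ = d + t • v := by
        rw [hA, hd]
        abel
      have hdd : A xp - A xh + δ = d := by rw [hd]; abel
      have hnorm : ‖d + t • v‖ ^ 2 = ‖d‖ ^ 2 + 2 * (t * ⟪d, v⟫) + t ^ 2 * ‖v‖ ^ 2 := by
        rw [norm_add_sq_real, real_inner_smul_right, norm_smul, Real.norm_eq_abs,
          mul_pow, sq_abs]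
      have hconv : f ((1 - t) • xp + t • y) ≤ (1 - t) * f xp + t * f y :=
        hf.2 (Set.mem_univ _) (Set.mem_univ _) (by linarith) (le_of_lt ht0) (by ring)
      have hlin : ⟪l, A ((1 - t) • xp + t • y)⟫ = ⟪l, A xp⟫ + t * ⟪l, v⟫ := by
        rw [hA, inner_add_right, real_inner_smul_right]
      have hmin' := hmin _ hxt
      rw [hq, hnorm, hlin, hdd] at hmin'
      have hstep : 0 ≤ t * (f y - f xp + ⟪l, v⟫ + c * ⟪d, v⟫ + t * K) := by
        nlinarith [hmin', hconv]
      have : 0 ≤ f y - f xp + ⟪l, v⟫ + c * ⟪d, v⟫ + t * K :=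
        nonneg_of_mul_nonneg_right hstep ht0
      rw [hDeq]; linarith
    have hD0 : 0 ≤ D := by
      by_contra hneg
      push_neg at hneg
      have hε : 0 < -D / 2 := by linarith
      set t : ℝ := min 1 ((-D / 2) / (K + 1)) with ht
      have ht0 : 0 < t := lt_min one_pos (by positivity)
      have ht1 : t ≤ 1 := min_le_left _ _
      have htK : t * K ≤ -D / 2 := by
        have h1 : t ≤ (-D / 2) / (K + 1) := min_le_right _ _
        have h2 : t * K ≤ ((-D / 2) / (K + 1)) * K :=
          mul_le_mul_of_nonneg_right h1 hKnn
        have h3 : ((-D / 2) / (K + 1)) * K ≤ -D / 2 := by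
          rw [div_mul_eq_mul_div, div_le_iff₀ (by linarith)]
          nlinarith
        linarith
      have := key t ht0 ht1
      linarith
    rw [hD] at hD0; linarith
  refine ⟨main, fun β y hy => ?_⟩
  have := main y hy
  simp only [inner_sub_right]
  linarith
end

section
/- Dual–primal cross inequality at a saddle point. Suppose that for each i = 1,…,N the point x_i⁺ ∈ X_i and the vector λ_i⁺ ∈ ℝ^p satisfy f_i(x_i⁺) + λ_i⁺ᵀ A_i x_i⁺ ≤ f_i(x_i) + λ_i⁺ᵀ A_i x_i for every x_i ∈ X_i, and let (x*, λ*) be a saddle point of the Lagrangian L. Then Σ_{i=1}^N (λ_i⁺ − λ*)ᵀ (A_i x_i⁺ − A_i x_i*) ≤ 0. -/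
open Finset
open scoped RealInnerProductSpace

/-- **Dual–primal cross inequality at a saddle point.**
If for each `i` the point `x_i⁺ ∈ X_i` and the vector `λ_i⁺` satisfy
`f_i(x_i⁺) + λ_i⁺ᵀ A_i x_i⁺ ≤ f_i(x_i) + λ_i⁺ᵀ A_i x_i` for all `x_i ∈ X_i`, and `(x*, λ*)`
is a saddle point of the Lagrangian `L`, then
`Σ_i (λ_i⁺ − λ*)ᵀ (A_i x_i⁺ − A_i x_i*) ≤ 0`. -/
theorem dual_primal_cross_inequality
    (N p : ℕ) (hN : 0 < N) (n : Fin N → ℕ)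
    (f : ∀ i : Fin N, EuclideanSpace ℝ (Fin (n i)) → ℝ)
    (X : ∀ i : Fin N, Set (EuclideanSpace ℝ (Fin (n i))))
    (hXne : ∀ i, (X i).Nonempty)
    (A : ∀ i : Fin N, EuclideanSpace ℝ (Fin (n i)) →ₗ[ℝ] EuclideanSpace ℝ (Fin p))
    (b : EuclideanSpace ℝ (Fin p))
    (xp : ∀ i, EuclideanSpace ℝ (Fin (n i))) (lp : Fin N → EuclideanSpace ℝ (Fin p))
    (hxp : ∀ i, xp i ∈ X i)
    (hmin : ∀ i, ∀ y ∈ X i,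
      f i (xp i) + ⟪lp i, A i (xp i)⟫ ≤ f i y + ⟪lp i, A i y⟫)
    (xs : ∀ i, EuclideanSpace ℝ (Fin (n i))) (ls : EuclideanSpace ℝ (Fin p))
    (hxs : ∀ i, xs i ∈ X i)
    (hsaddle1 : ∀ μ : EuclideanSpace ℝ (Fin p),
      (∑ i, f i (xs i)) + ⟪μ, (∑ i, A i (xs i)) - b⟫
        ≤ (∑ i, f i (xs i)) + ⟪ls, (∑ i, A i (xs i)) - b⟫)
    (hsaddle2 : ∀ y : (∀ i, EuclideanSpace ℝ (Fin (n i))), (∀ i, y i ∈ X i) →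
      (∑ i, f i (xs i)) + ⟪ls, (∑ i, A i (xs i)) - b⟫
        ≤ (∑ i, f i (y i)) + ⟪ls, (∑ i, A i (y i)) - b⟫) :
    ∑ i, ⟪lp i - ls, A i (xp i) - A i (xs i)⟫ ≤ 0 := by
  have h1 : ∀ i, ⟪lp i, A i (xp i) - A i (xs i)⟫ ≤ f i (xs i) - f i (xp i) := by
    intro i
    have := hmin i (xs i) (hxs i)
    rw [inner_sub_right]
    linarith
  have h2 : ∑ i, (f i (xs i) - f i (xp i)) ≤ ∑ i, ⟪ls, A i (xp i) - A i (xs i)⟫ := by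
    have := hsaddle2 xp hxp
    have e : ∀ z : ∀ i, EuclideanSpace ℝ (Fin (n i)),
        ⟪ls, (∑ i, A i (z i)) - b⟫ = (∑ i, ⟪ls, A i (z i)⟫) - ⟪ls, b⟫ := by
      intro z; rw [inner_sub_right, inner_sum]
    rw [e xs, e xp] at this
    simp only [inner_sub_right, Finset.sum_sub_distrib]
    linarith
  calc ∑ i, ⟪lp i - ls, A i (xp i) - A i (xs i)⟫
      = ∑ i, (⟪lp i, A i (xp i) - A i (xs i)⟫ - ⟪ls, A i (xp i) - A i (xs i)⟫) := by
        simp [inner_sub_left]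
    _ ≤ ∑ i, ((f i (xs i) - f i (xp i)) - ⟪ls, A i (xp i) - A i (xs i)⟫) := by
        apply Finset.sum_le_sum; intro i _; linarith [h1 i]
    _ ≤ 0 := by
        rw [Finset.sum_sub_distrib]; linarith
end

section
/- Eigenvalue localization for the centered consensus matrix. Let 𝒲 = (w_{ij}) ∈ ℝ^{N×N} be symmetric, positive semidefinite, with nonnegative entries, positive diagonal entries, row sums equal to one (Σ_j w_{ij} = 1 for all i), and suppose the graph on {1,…,N} with edges {(i,j) : w_{ij} > 0} is connected. Then every eigenvalue of 𝒲 − (1/N)𝟙𝟙ᵀ lies in the half-open interval [0, 1); in particular all eigenvalues lie in (−1/3, 1). -/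
/-!
An eigenvector `v` of `W - (1/N)𝟙𝟙ᵀ` with eigenvalue `μ ≠ 0` has coordinate sum zero, because
`W` has column sums one; hence it is an eigenvector of `W` itself. Positive semidefiniteness
gives `μ ≥ 0` and stochasticity gives `|μ| ≤ 1`. Finally `μ = 1` is impossible: by the maximum
principle a fixed vector of `W` is constant on the neighbours of a maximum, so by connectivity it
is constant, and a constant vector with coordinate sum zero vanishes.
-/

open Finset Matrix

theorem Matrix.exists_mulVec_eq_smul_of_mem_spectrum {K n : Type*} [Field K] [Fintype n]
    [DecidableEq n] {A : Matrix n n K} {μ : K} (h : μ ∈ spectrum K A) :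
    ∃ v ≠ 0, A *ᵥ v = μ • v := by
  rw [← Matrix.spectrum_toLin', ← Module.End.hasEigenvalue_iff_mem_spectrum] at h
  obtain ⟨v, hv⟩ := h.exists_hasEigenvector
  exact ⟨v, hv.2, hv.apply_eq_smul⟩

theorem SimpleGraph.Preconnected.mem_of_adj_closed {V : Type*} {G : SimpleGraph V}
    (hG : G.Preconnected) {S : Set V} (hS : ∀ a b, G.Adj a b → a ∈ S → b ∈ S) {u : V}
    (hu : u ∈ S) (w : V) : w ∈ S := by
  obtain ⟨p⟩ := hG u w
  induction p with
  | nil => exact hu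
  | cons hadj _ ih => exact ih (hS _ _ hadj hu)

namespace Matrix

variable {n : Type*} [Fintype n]

theorem PosSemidef.nonneg_of_mulVec_eq_smul {W : Matrix n n ℝ} (hW : W.PosSemidef)
    {v : n → ℝ} (hv0 : v ≠ 0) {μ : ℝ} (hv : W *ᵥ v = μ • v) : 0 ≤ μ := by
  have h := hW.dotProduct_mulVec_nonneg v
  rw [hv, dotProduct_smul, smul_eq_mul] at h
  exact (mul_nonneg_iff_of_pos_right (dotProduct_star_self_pos_iff.mpr hv0)).mp h

theorem sum_mulVec_of_sum_col_eq_one {W : Matrix n n ℝ} (hcol : ∀ j, ∑ i, W i j = 1)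
    (v : n → ℝ) : ∑ i, (W *ᵥ v) i = ∑ i, v i := by
  simp only [mulVec, dotProduct]
  rw [Finset.sum_comm]
  simp only [← Finset.sum_mul, hcol, one_mul]

theorem sum_eq_zero_and_mulVec_eq_smul_of_centered [Nonempty n] {W : Matrix n n ℝ}
    (hcol : ∀ j, ∑ i, W i j = 1) {v : n → ℝ} {μ : ℝ}
    (hv : (W - of fun _ _ => (Fintype.card n : ℝ)⁻¹) *ᵥ v = μ • v) (hμ : μ ≠ 0) :
    ∑ i, v i = 0 ∧ W *ᵥ v = μ • v := by
  have hJ : (of fun _ _ : n => (Fintype.card n : ℝ)⁻¹) *ᵥ v =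
      fun _ => (Fintype.card n : ℝ)⁻¹ * ∑ i, v i := by
    ext i; simp [mulVec, dotProduct, Finset.mul_sum]
  rw [sub_mulVec, hJ] at hv
  have hsum : μ * ∑ i, v i = 0 := by
    have h := congrArg (fun u => ∑ i, u i) hv
    simp only [Pi.sub_apply, Pi.smul_apply, smul_eq_mul, Finset.sum_sub_distrib,
      sum_mulVec_of_sum_col_eq_one hcol, Finset.sum_const, card_univ, nsmul_eq_mul] at h
    rw [Finset.mul_sum, ← h, mul_inv_cancel_left₀ (by positivity), sub_self]
  have hs : ∑ i, v i = 0 := (mul_eq_zero.mp hsum).resolve_left hμ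
  refine ⟨hs, ?_⟩
  simpa only [hs, mul_zero, Pi.zero_def.symm, sub_zero] using hv

theorem abs_le_one_of_mulVec_eq_smul {W : Matrix n n ℝ} (hnn : ∀ i j, 0 ≤ W i j)
    (hrow : ∀ i, ∑ j, W i j = 1) {v : n → ℝ} (hv0 : v ≠ 0) {μ : ℝ}
    (hv : W *ᵥ v = μ • v) : |μ| ≤ 1 := by
  obtain ⟨k, hk⟩ := Function.ne_iff.mp hv0
  have : Nonempty n := ⟨k⟩
  obtain ⟨i, hi⟩ := Finite.exists_max fun j => |v j|
  have hvi : 0 < |v i| := (abs_pos.mpr hk).trans_le (hi k)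
  refine le_of_mul_le_mul_right ?_ hvi
  calc |μ| * |v i| = |∑ j, W i j * v j| := by
        rw [← abs_mul, ← smul_eq_mul, ← Pi.smul_apply, ← hv]; rfl
    _ ≤ ∑ j, W i j * |v j| := by
        refine (abs_sum_le_sum_abs _ _).trans_eq (Finset.sum_congr rfl fun j _ => ?_)
        rw [abs_mul, abs_of_nonneg (hnn i j)]
    _ ≤ ∑ j, W i j * |v i| :=
        Finset.sum_le_sum fun j _ => mul_le_mul_of_nonneg_left (hi j) (hnn i j)
    _ = 1 * |v i| := by rw [← Finset.sum_mul, hrow]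

theorem apply_eq_of_mulVec_eq_self_of_isMax {W : Matrix n n ℝ} (hnn : ∀ i j, 0 ≤ W i j)
    (hrow : ∀ i, ∑ j, W i j = 1) {v : n → ℝ} (hv : W *ᵥ v = v) {i j : n}
    (hmax : ∀ k, v k ≤ v i) (hij : 0 < W i j) : v j = v i := by
  have hzero : ∑ k, W i k * (v i - v k) = 0 := by
    simp only [mul_sub, Finset.sum_sub_distrib, ← Finset.sum_mul, hrow, one_mul]
    exact sub_eq_zero.mpr (congrFun hv i).symm
  have hterm := (Finset.sum_eq_zero_iff_of_nonneg fun k _ =>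
    mul_nonneg (hnn i k) (sub_nonneg.mpr (hmax k))).mp hzero j (Finset.mem_univ j)
  linarith [(mul_eq_zero.mp hterm).resolve_left hij.ne']

theorem apply_eq_of_mulVec_eq_self {W : Matrix n n ℝ} (hnn : ∀ i j, 0 ≤ W i j)
    (hrow : ∀ i, ∑ j, W i j = 1) (hsym : W.IsSymm)
    (hconn : (SimpleGraph.fromRel fun i j => 0 < W i j).Preconnected) {v : n → ℝ}
    (hv : W *ᵥ v = v) (i j : n) : v i = v j := by
  have : Nonempty n := ⟨i⟩
  obtain ⟨k, hk⟩ := Finite.exists_max v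
  have hclosed : ∀ a b, (SimpleGraph.fromRel fun i j => 0 < W i j).Adj a b →
      a ∈ {c | v c = v k} → b ∈ {c | v c = v k} := by
    intro a b hab ha
    have hab : 0 < W a b := by
      rcases ((SimpleGraph.fromRel_adj _ _ _).mp hab).2 with h | h
      exacts [h, hsym.apply a b ▸ h]
    exact (apply_eq_of_mulVec_eq_self_of_isMax hnn hrow hv (fun c => ha ▸ hk c) hab).trans ha
  exact (hconn.mem_of_adj_closed hclosed rfl i).trans
    (hconn.mem_of_adj_closed hclosed rfl j).symm

end Matrix

theorem eigenvalue_localization_general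
    (N : ℕ) (hN : 0 < N)
    (W : Matrix (Fin N) (Fin N) ℝ)
    (hWsym : W.IsSymm)
    (hWpsd : W.PosSemidef)
    (hWnn : ∀ i j, 0 ≤ W i j)
    (hWrow : ∀ i, ∑ j, W i j = 1)
    (hconn : (SimpleGraph.fromRel (fun i j : Fin N => 0 < W i j)).Connected) :
    ∀ μ ∈ spectrum ℝ (W - Matrix.of (fun _ _ : Fin N => (N : ℝ)⁻¹)),
      μ ∈ Set.Ico (0 : ℝ) 1 ∧ μ ∈ Set.Ioo (-(1 / 3) : ℝ) 1 := by
  intro μ hμ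
  obtain ⟨v, hv0, hv⟩ := exists_mulVec_eq_smul_of_mem_spectrum hμ
  have : Nonempty (Fin N) := ⟨⟨0, hN⟩⟩
  have hcol : ∀ j, ∑ i, W i j = 1 := fun j => by simpa only [hWsym.apply] using hWrow j
  have hμ : 0 ≤ μ ∧ μ < 1 := by
    rcases eq_or_ne μ 0 with rfl | hμ0
    · norm_num
    obtain ⟨hs, hWv⟩ := sum_eq_zero_and_mulVec_eq_smul_of_centered hcol
      (by simpa only [Fintype.card_fin] using hv) hμ0
    refine ⟨hWpsd.nonneg_of_mulVec_eq_smul hv0 hWv,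
      (le_abs_self μ |>.trans (abs_le_one_of_mulVec_eq_smul hWnn hWrow hv0 hWv)).lt_of_ne ?_⟩
    rintro rfl
    have hconst := apply_eq_of_mulVec_eq_self hWnn hWrow hWsym hconn.preconnected
      (by simpa only [one_smul] using hWv)
    refine hv0 (funext fun i => ?_)
    have : (N : ℝ) * v i = 0 := by
      simpa [← hconst i] using hs
    simpa [hN.ne'] using this
  exact ⟨hμ, by linarith [hμ.1], hμ.2⟩

/-- **Eigenvalue localization for the centered consensus matrix.**
Let `𝒲 ∈ ℝ^{N×N}` be symmetric, positive semidefinite, with nonnegative entries, positive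
diagonal entries, row sums equal to one, and connected positivity graph. Then every
eigenvalue of `𝒲 − (1/N)𝟙𝟙ᵀ` lies in `[0, 1)`; in particular in `(−1/3, 1)`. -/
theorem eigenvalue_localization
    (N : ℕ) (hN : 0 < N)
    (W : Matrix (Fin N) (Fin N) ℝ)
    (hWsym : W.IsSymm)
    (hWpsd : W.PosSemidef)
    (hWnn : ∀ i j, 0 ≤ W i j)
    (hWdiag : ∀ i, 0 < W i i)
    (hWrow : ∀ i, ∑ j, W i j = 1)
    (hconn : (SimpleGraph.fromRel (fun i j : Fin N => 0 < W i j)).Connected) :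
    ∀ μ ∈ spectrum ℝ (W - Matrix.of (fun _ _ : Fin N => (N : ℝ)⁻¹)),
      μ ∈ Set.Ico (0 : ℝ) 1 ∧ μ ∈ Set.Ioo (-(1 / 3) : ℝ) 1 :=
  eigenvalue_localization_general N hN W hWsym hWpsd hWnn hWrow hconn
end
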